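/- arXiv:1708.08793 — 2 statements merged into one kernel-verified Lean document; each statement's English description precedes it below -/
import Mathlib

section
/- For all a>0 and ρ>0, the four-dimensional stationary slow-diffusion density integrates to one: e^{-a} + ∫_{‖x‖<ρ} (a/(π²ρ⁴)) [2 + a(1 − ‖x‖²/ρ²)] exp(−(a/ρ²)‖x‖²) dx = 1, where the integral is over the open ball of radius ρ in ℝ⁴. -/
/-!
In polar coordinates the integral over the ball becomes `4 · (π²/2) = 2π²` times a radial
integral over `(0, ρ)`. The integrand `r³ · (profile)` has the explicit primitive
`(a r⁴/ρ⁴ - a r²/ρ² - 1) e^{-a r²/ρ²}`, which rises from `-1` at `r = 0` to `-e^{-a}` at `r = ρ`,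
so the absolutely continuous part carries mass exactly `1 - e^{-a}`.
-/

open Real MeasureTheory

open Metric Set Module in
theorem setIntegral_ball_fun_norm_addHaar {E F : Type*} [NormedAddCommGroup E] [NormedSpace ℝ E]
    [FiniteDimensional ℝ E] [Nontrivial E] [MeasurableSpace E] [BorelSpace E]
    [NormedAddCommGroup F] [NormedSpace ℝ F] (μ : Measure E) [μ.IsAddHaarMeasure]
    (f : ℝ → F) {r : ℝ} (hr : 0 ≤ r) :
    ∫ x in ball (0 : E) r, f ‖x‖ ∂μ =
      finrank ℝ E • μ.real (ball 0 1) • ∫ y in (0 : ℝ)..r, y ^ (finrank ℝ E - 1) • f y := by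
  have hball : ∫ x in ball (0 : E) r, f ‖x‖ ∂μ = ∫ x, (Iio r).indicator f ‖x‖ ∂μ := by
    rw [← integral_indicator measurableSet_ball]
    congr with x
    simp [indicator]
  have hradial : ∫ y in Ioi (0 : ℝ), y ^ (finrank ℝ E - 1) • (Iio r).indicator f y =
      ∫ y in (0 : ℝ)..r, y ^ (finrank ℝ E - 1) • f y := by
    simp_rw [← indicator_smul_apply (Iio r) (· ^ (finrank ℝ E - 1)) f]
    rw [setIntegral_indicator measurableSet_Iio, Ioi_inter_Iio, intervalIntegral.integral_of_le hr,
      integral_Ioc_eq_integral_Ioo]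
  rw [hball, integral_fun_norm_addHaar, hradial]

open Metric Module Nat in
theorem measureReal_ball_of_finrank_eq_two_mul {E : Type*} [NormedAddCommGroup E]
    [InnerProductSpace ℝ E] [FiniteDimensional ℝ E] [Nontrivial E] [MeasurableSpace E]
    [BorelSpace E] {k : ℕ} (hk : finrank ℝ E = 2 * k) (x : E) {r : ℝ} (hr : 0 ≤ r) :
    volume.real (ball x r) = r ^ (2 * k) * (π ^ k / k !) := by
  rw [measureReal_def, InnerProductSpace.volume_ball_of_dim_even hk, hk, ← ENNReal.ofReal_pow hr,
    ← ENNReal.ofReal_mul (by positivity), ENNReal.toReal_ofReal (by positivity)]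

theorem hasDerivAt_stationary_radial_primitive (a ρ r : ℝ) :
    HasDerivAt (fun r => (a * r ^ 4 / ρ ^ 4 - a * r ^ 2 / ρ ^ 2 - 1) * exp (-(a / ρ ^ 2) * r ^ 2))
      (2 * a / ρ ^ 4 * r ^ 3 * ((2 + a * (1 - r ^ 2 / ρ ^ 2)) * exp (-(a / ρ ^ 2) * r ^ 2))) r := by
  have hpoly : HasDerivAt (fun r => a * r ^ 4 / ρ ^ 4 - a * r ^ 2 / ρ ^ 2 - 1)
      (4 * a * r ^ 3 / ρ ^ 4 - 2 * a * r / ρ ^ 2) r := by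
    refine (((((hasDerivAt_pow 4 r).const_mul a).div_const (ρ ^ 4)).sub
      (((hasDerivAt_pow 2 r).const_mul a).div_const (ρ ^ 2))).sub_const 1).congr_deriv ?_
    push_cast
    ring
  have hgauss : HasDerivAt (fun r => exp (-(a / ρ ^ 2) * r ^ 2))
      (exp (-(a / ρ ^ 2) * r ^ 2) * (-(a / ρ ^ 2) * (2 * r))) r := by
    refine ((hasDerivAt_pow 2 r).const_mul (-(a / ρ ^ 2))).exp.congr_deriv ?_
    push_cast
    ring
  refine (hpoly.mul hgauss).congr_deriv ?_
  ring

theorem integral_stationary_radial_profile (a : ℝ) {ρ : ℝ} (hρ : ρ ≠ 0) :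
    ∫ r in (0 : ℝ)..ρ, 2 * a / ρ ^ 4 * r ^ 3 *
      ((2 + a * (1 - r ^ 2 / ρ ^ 2)) * exp (-(a / ρ ^ 2) * r ^ 2)) = 1 - exp (-a) := by
  rw [intervalIntegral.integral_eq_sub_of_hasDerivAt
    (fun r _ => hasDerivAt_stationary_radial_primitive a ρ r)
    (by apply Continuous.intervalIntegrable; fun_prop)]
  field_simp
  norm_num
  ring

theorem stationary_density_4d_normalized_general (a ρ : ℝ) (hρ : 0 < ρ) :
    Real.exp (-a) +
      (∫ x in Metric.ball (0 : EuclideanSpace ℝ (Fin 4)) ρ,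
        (a / (π ^ 2 * ρ ^ 4)) * (2 + a * (1 - ‖x‖ ^ 2 / ρ ^ 2)) *
          Real.exp (-(a / ρ ^ 2) * ‖x‖ ^ 2)) = 1 := by
  have hdim : Module.finrank ℝ (EuclideanSpace ℝ (Fin 4)) = 2 * 2 := by simp
  have hradial := setIntegral_ball_fun_norm_addHaar (volume : Measure (EuclideanSpace ℝ (Fin 4)))
    (fun r => (a / (π ^ 2 * ρ ^ 4)) * (2 + a * (1 - r ^ 2 / ρ ^ 2)) *
      Real.exp (-(a / ρ ^ 2) * r ^ 2)) hρ.le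
  have hprofile : ∫ r in (0 : ℝ)..ρ, r ^ (2 * 2 - 1) * ((a / (π ^ 2 * ρ ^ 4)) *
      (2 + a * (1 - r ^ 2 / ρ ^ 2)) * Real.exp (-(a / ρ ^ 2) * r ^ 2)) =
      (2 * π ^ 2)⁻¹ * (1 - exp (-a)) := by
    rw [← integral_stationary_radial_profile a hρ.ne', ← intervalIntegral.integral_const_mul]
    congr with r
    field_simp
    ring
  rw [hradial, measureReal_ball_of_finrank_eq_two_mul hdim 0 zero_le_one, hdim]
  simp only [smul_eq_mul, nsmul_eq_mul]
  rw [hprofile]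
  field_simp
  ring

theorem stationary_density_4d_normalized (a ρ : ℝ) (ha : 0 < a) (hρ : 0 < ρ) :
    Real.exp (-a) +
      (∫ x in Metric.ball (0 : EuclideanSpace ℝ (Fin 4)) ρ,
        (a / (π ^ 2 * ρ ^ 4)) * (2 + a * (1 - ‖x‖ ^ 2 / ρ ^ 2)) *
          Real.exp (-(a / ρ ^ 2) * ‖x‖ ^ 2)) = 1 :=
  stationary_density_4d_normalized_general a ρ hρ
end

section
/- For the Goldstein–Kac telegraph process density, the total mass identity holds for all λ>0, c>0, t>0: e^{-λt} + ∫_{-ct}^{ct} (λ e^{-λt}/(2c))[I₀((λ/c)√(c²t²−x²)) + (ct/√(c²t²−x²)) I₁((λ/c)√(c²t²−x²))] dx = 1. -/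
/-!
Write `a = ct`, `b = λ/c`. Expanding `I₀` and `I₁` in their power series, the integrand
becomes a power series in `s = a² - x²` with nonnegative coefficients, so it may be integrated
termwise.
Differentiating `x (a² - x²)^(k+1)` gives a recursion for the moments, whence
`∫₋ₐᵃ (a² - x²)^k dx = 2 a^(2k+1) 4^k (k!)² / (2k+1)!`, and the `k`-th term integrates to
`(2/b) ((ab)^(2k+1)/(2k+1)! + (ab)^(2k+2)/(2k+2)!)`. These are the terms of `(2/b)(e^(ab) - 1)`
grouped in pairs, so the continuous part has mass `1 - e^(-λt)`.
-/

open Real MeasureTheory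

noncomputable def besselI0 (z : ℝ) : ℝ := ∑' k : ℕ, (z / 2) ^ (2 * k) / ((k.factorial : ℝ)) ^ 2

noncomputable def besselI1 (z : ℝ) : ℝ :=
  ∑' k : ℕ, (z / 2) ^ (2 * k + 1) / ((k.factorial : ℝ) * ((k + 1).factorial : ℝ))

open scoped Nat

theorem hasDerivAt_mul_sq_sub_sq_pow (a : ℝ) (k : ℕ) (x : ℝ) :
    HasDerivAt (fun y => y * (a ^ 2 - y ^ 2) ^ (k + 1))
      ((2 * k + 3) * (a ^ 2 - x ^ 2) ^ (k + 1) - 2 * (k + 1) * a ^ 2 * (a ^ 2 - x ^ 2) ^ k) x := by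
  refine ((hasDerivAt_id' x).fun_mul
    (((hasDerivAt_pow 2 x).const_sub (a ^ 2)).fun_pow (k + 1))).congr_deriv ?_
  simp only [Nat.add_sub_cancel, Nat.cast_add, Nat.cast_one, Nat.cast_ofNat]
  ring

theorem integral_sq_sub_sq_pow_succ (a : ℝ) (k : ℕ) :
    (2 * k + 3) * ∫ x in -a..a, (a ^ 2 - x ^ 2) ^ (k + 1) =
      2 * (k + 1) * a ^ 2 * ∫ x in -a..a, (a ^ 2 - x ^ 2) ^ k := by
  have hFTC := intervalIntegral.integral_eq_sub_of_hasDerivAt (a := -a) (b := a)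
    (fun x _ => hasDerivAt_mul_sq_sub_sq_pow a k x)
    (by apply Continuous.intervalIntegrable; fun_prop)
  rw [intervalIntegral.integral_sub (by apply Continuous.intervalIntegrable; fun_prop)
      (by apply Continuous.intervalIntegrable; fun_prop),
    intervalIntegral.integral_const_mul, intervalIntegral.integral_const_mul] at hFTC
  simp only [neg_sq, sub_self, zero_pow k.succ_ne_zero, mul_zero] at hFTC
  linarith

theorem integral_sq_sub_sq_pow (a : ℝ) (k : ℕ) :
    ∫ x in -a..a, (a ^ 2 - x ^ 2) ^ k =
      2 * a ^ (2 * k + 1) * 4 ^ k * (k ! : ℝ) ^ 2 / (2 * k + 1)! := by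
  induction k with
  | zero => simp; ring
  | succ k ih =>
    have hrec := integral_sq_sub_sq_pow_succ a k
    rw [ih] at hrec
    field_simp at hrec
    rw [eq_div_iff (by positivity), show 2 * (k + 1) + 1 = 2 * k + 1 + 1 + 1 by ring,
      Nat.factorial_succ (2 * k + 1 + 1), Nat.factorial_succ (2 * k + 1), Nat.factorial_succ k]
    push_cast
    linear_combination (2 * (k : ℝ) + 2) * hrec

theorem summable_pow_div_factorial_mul_factorial (y : ℝ) (m : ℕ) :
    Summable fun k : ℕ => y ^ k / (k ! * (k + m)! : ℝ) := by
  refine (summable_pow_div_factorial |y|).of_norm_bounded fun k => ?_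
  rw [norm_div, norm_pow, Real.norm_eq_abs, norm_of_nonneg (by positivity)]
  gcongr
  exact le_mul_of_one_le_right (by positivity) (by exact_mod_cast (k + m).factorial_pos)

theorem summable_besselI0_series (z : ℝ) :
    Summable fun k : ℕ => (z / 2) ^ (2 * k) / (k ! : ℝ) ^ 2 := by
  convert summable_pow_div_factorial_mul_factorial ((z / 2) ^ 2) 0 using 2 with k
  rw [pow_mul, add_zero, sq (k ! : ℝ)]

theorem summable_besselI1_series (z : ℝ) :
    Summable fun k : ℕ => (z / 2) ^ (2 * k + 1) / (k ! * (k + 1)! : ℝ) := by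
  refine ((summable_pow_div_factorial_mul_factorial ((z / 2) ^ 2) 1).mul_left (z / 2)).congr
    fun k => ?_
  rw [← pow_mul, pow_succ]
  ring

theorem hasSum_besselI0_mul_sqrt (b : ℝ) {s : ℝ} (hs : 0 ≤ s) :
    HasSum (fun k : ℕ => (b / 2) ^ (2 * k) / (k ! : ℝ) ^ 2 * s ^ k) (besselI0 (b * √s)) := by
  rw [besselI0]
  convert (summable_besselI0_series (b * √s)).hasSum using 2 with k
  rw [mul_div_right_comm, mul_pow, pow_mul (√s), sq_sqrt hs]
  ring

theorem hasSum_besselI1_mul_sqrt (b : ℝ) {s : ℝ} (hs : 0 ≤ s) :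
    HasSum (fun k : ℕ => (b / 2) ^ (2 * k + 1) / (k ! * (k + 1)! : ℝ) * s ^ k * √s)
      (besselI1 (b * √s)) := by
  rw [besselI1]
  convert (summable_besselI1_series (b * √s)).hasSum using 2 with k
  rw [mul_div_right_comm, mul_pow, pow_succ (√s), pow_mul (√s), sq_sqrt hs]
  ring

noncomputable def telegraphCoeff (a b : ℝ) (k : ℕ) : ℝ :=
  (b / 2) ^ (2 * k) / (k ! : ℝ) ^ 2 + a * (b / 2) ^ (2 * k + 1) / (k ! * (k + 1)! : ℝ)

theorem hasSum_telegraphCoeff_mul_pow (a b : ℝ) {s : ℝ} (hs : 0 < s) :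
    HasSum (fun k => telegraphCoeff a b k * s ^ k)
      (besselI0 (b * √s) + a / √s * besselI1 (b * √s)) := by
  convert (hasSum_besselI0_mul_sqrt b hs.le).add
    ((hasSum_besselI1_mul_sqrt b hs.le).mul_left (a / √s)) using 2 with k
  have : √s ≠ 0 := (sqrt_pos.2 hs).ne'
  unfold telegraphCoeff
  field_simp

theorem telegraphCoeff_mul_integral_sq_sub_sq_pow (a : ℝ) {b : ℝ} (hb : b ≠ 0) (k : ℕ) :
    telegraphCoeff a b k * ∫ x in -a..a, (a ^ 2 - x ^ 2) ^ k =
      2 / b * ((a * b) ^ (2 * k + 1) / (2 * k + 1)! + (a * b) ^ (2 * k + 2) / (2 * k + 2)!) := by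
  rw [integral_sq_sub_sq_pow, telegraphCoeff,
    show (4 : ℝ) ^ k = 2 ^ (2 * k) by rw [pow_mul]; norm_num,
    show 2 * k + 2 = 2 * k + 1 + 1 by ring, Nat.factorial_succ (2 * k + 1), Nat.factorial_succ k]
  push_cast
  rw [div_pow, div_pow]
  field_simp
  ring

theorem hasSum_pow_odd_div_factorial_add_pow_even_div_factorial (x : ℝ) :
    HasSum (fun k : ℕ => x ^ (2 * k + 1) / (2 * k + 1)! + x ^ (2 * k + 2) / (2 * k + 2)!)
      (exp x - 1) := by
  have h : HasSum (fun n : ℕ => x ^ (n + 1) / (n + 1)!) (exp x - 1) := by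
    have := (hasSum_nat_add_iff' 1).2 (NormedSpace.expSeries_div_hasSum_exp x)
    rw [← exp_eq_exp_ℝ] at this
    simpa using this
  have heven := h.summable.comp_injective (mul_right_injective₀ (two_ne_zero' ℕ))
  have hodd := h.summable.comp_injective
    ((add_left_injective 1).comp (mul_right_injective₀ (two_ne_zero' ℕ)))
  simp only [Function.comp_def] at heven hodd
  have hpairs := heven.hasSum.add hodd.hasSum
  rw [tsum_even_add_odd (f := fun n : ℕ => x ^ (n + 1) / (n + 1)!) heven hodd,
    h.tsum_eq] at hpairs
  simpa only [add_assoc, Nat.reduceAdd] using hpairs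

theorem integral_besselI0_add_div_sqrt_mul_besselI1 {a b : ℝ} (ha : 0 < a) (hb : 0 < b) :
    ∫ x in Set.Ioo (-a) a, (besselI0 (b * √(a ^ 2 - x ^ 2)) +
        a / √(a ^ 2 - x ^ 2) * besselI1 (b * √(a ^ 2 - x ^ 2))) =
      2 / b * (exp (a * b) - 1) := by
  set F : ℕ → ℝ → ℝ := fun k x => telegraphCoeff a b k * (a ^ 2 - x ^ 2) ^ k
  have hpos : ∀ x ∈ Set.Ioo (-a) a, 0 < a ^ 2 - x ^ 2 := fun x ⟨h₁, h₂⟩ => by nlinarith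
  have hF_nonneg : ∀ k, ∀ x ∈ Set.Ioo (-a) a, 0 ≤ F k x := fun k x hx => by
    have := hpos x hx
    simp only [F, telegraphCoeff]
    positivity
  have hF_integral : ∀ k, ∫ x in Set.Ioo (-a) a, F k x =
      2 / b * ((a * b) ^ (2 * k + 1) / (2 * k + 1)! + (a * b) ^ (2 * k + 2) / (2 * k + 2)!) := by
    intro k
    rw [← telegraphCoeff_mul_integral_sq_sub_sq_pow a hb.ne',
      ← intervalIntegral.integral_const_mul, intervalIntegral.integral_of_le (by linarith),
      integral_Ioc_eq_integral_Ioo]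
  have hpairs := (hasSum_pow_odd_div_factorial_add_pow_even_div_factorial (a * b)).mul_left (2 / b)
  have hF_norm : Summable fun k => ∫ x in Set.Ioo (-a) a, ‖F k x‖ :=
    hpairs.summable.congr fun k => by
      rw [← hF_integral k]
      exact setIntegral_congr_fun measurableSet_Ioo
        fun x hx => (norm_of_nonneg (hF_nonneg k x hx)).symm
  have hF_integrable : ∀ k, IntegrableOn (F k) (Set.Ioo (-a) a) := fun k =>
    (by fun_prop : Continuous (F k)).integrableOn_Icc.mono_set Set.Ioo_subset_Icc_self
  rw [setIntegral_congr_fun measurableSet_Ioo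
    fun x hx => (hasSum_telegraphCoeff_mul_pow a b (hpos x hx)).tsum_eq.symm]
  refine (hasSum_integral_of_summable_integral_norm hF_integrable hF_norm).unique ?_
  simpa only [hF_integral] using hpairs

theorem telegraph_total_mass (lam c t : ℝ) (hlam : 0 < lam) (hc : 0 < c) (ht : 0 < t) :
    Real.exp (-(lam * t)) +
      (∫ x in Set.Ioo (-(c * t)) (c * t),
        (lam * Real.exp (-(lam * t)) / (2 * c)) *
          (besselI0 ((lam / c) * Real.sqrt ((c * t) ^ 2 - x ^ 2)) +
            ((c * t) / Real.sqrt ((c * t) ^ 2 - x ^ 2)) *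
              besselI1 ((lam / c) * Real.sqrt ((c * t) ^ 2 - x ^ 2)))) = 1 := by
  rw [integral_const_mul,
    integral_besselI0_add_div_sqrt_mul_besselI1 (by positivity) (by positivity),
    show c * t * (lam / c) = lam * t by field_simp, exp_neg]
  field_simp
  ring
end
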